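/- Let δ > 0, λ ∈ ℝ, and x : [-δ, T] → ℝ^n continuous with x(s) = 0 for all s ∈ [-δ, 0]. Define z(t) = ∫_{-δ}^{0} e^{λθ} x(t+θ) dθ. Then for every t ∈ [0, T], z(t) = ∫_0^t [x(s) - e^{-λδ} x(s-δ) 1_{(δ,∞)}(s) - λ z(s)] ds, i.e., z solves the corresponding Volterra integral equation with zero initial condition. -/

import Mathlib

open MeasureTheory intervalIntegral Set

/-!
Extend `x` continuously to all of `ℝ`. Substituting `u = t + θ` gives
`z(t) = e^{-λt} ∫_{t-δ}^t e^{λu} x(u) du`, so `z' = x(t) - e^{-λδ} x(t-δ) - λ z(t)`, while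
`z(0) = 0` because `x` vanishes on `[-δ, 0]`; the fundamental theorem of calculus then gives
the Volterra equation. The indicator appears because `x(s - δ) = 0` for `0 ≤ s ≤ δ`.
-/

variable {E : Type*} [NormedAddCommGroup E] [NormedSpace ℝ E]

noncomputable def distributedDelay (lam δ : ℝ) (y : ℝ → E) (t : ℝ) : E :=
  ∫ θ in (-δ)..0, Real.exp (lam * θ) • y (t + θ)

theorem hasDerivAt_integral_sub_const_to_self [CompleteSpace E] {f : ℝ → E} (hf : Continuous f)
    (δ t : ℝ) :
    HasDerivAt (fun t => ∫ u in (t - δ)..t, f u) (f t - f (t - δ)) t := by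
  have hG : ∀ r, HasDerivAt (fun r => ∫ u in (0 : ℝ)..r, f u) (f r) r := fun r =>
    (hf.integral_hasStrictDerivAt 0 r).hasDerivAt
  have hshift : HasDerivAt (fun r => ∫ u in (0 : ℝ)..(r - δ), f u) (f (t - δ)) t := by
    simpa using (hG (t - δ)).comp_sub_const t δ
  refine ((hG t).sub hshift).congr_of_eventuallyEq (Filter.Eventually.of_forall fun r => ?_)
  exact (integral_interval_sub_left (hf.intervalIntegrable _ _) (hf.intervalIntegrable _ _)).symm

theorem distributedDelay_eq_exp_smul_integral (lam δ : ℝ) (y : ℝ → E) (t : ℝ) :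
    distributedDelay lam δ y t =
      Real.exp (-(lam * t)) • ∫ u in (t - δ)..t, Real.exp (lam * u) • y u := by
  have hshift := integral_comp_add_left
    (fun u => Real.exp (-(lam * t)) • Real.exp (lam * u) • y u) t (a := -δ) (b := 0)
  rw [add_zero, ← sub_eq_add_neg] at hshift
  rw [← intervalIntegral.integral_smul, ← hshift, distributedDelay]
  refine integral_congr fun θ _ => ?_
  rw [smul_smul, ← Real.exp_add]
  ring_nf

theorem hasDerivAt_distributedDelay [CompleteSpace E] {y : ℝ → E} (hy : Continuous y)
    (lam δ t : ℝ) :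
    HasDerivAt (distributedDelay lam δ y)
      (y t - Real.exp (-(lam * δ)) • y (t - δ) - lam • distributedDelay lam δ y t) t := by
  have hexp : HasDerivAt (fun t => Real.exp (-(lam * t))) (-lam * Real.exp (-(lam * t))) t := by
    simpa [mul_comm] using ((hasDerivAt_id t).const_mul lam).neg.exp
  have hint := hasDerivAt_integral_sub_const_to_self
    (show Continuous fun u => Real.exp (lam * u) • y u by fun_prop) δ t
  have e₁ : Real.exp (-(lam * t)) * Real.exp (lam * t) = 1 := by
    rw [← Real.exp_add, neg_add_cancel, Real.exp_zero]
  have e₂ : Real.exp (-(lam * t)) * Real.exp (lam * (t - δ)) = Real.exp (-(lam * δ)) := by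
    rw [← Real.exp_add]; ring_nf
  rw [funext (distributedDelay_eq_exp_smul_integral lam δ y)]
  refine (hexp.smul hint).congr_deriv ?_
  beta_reduce
  simp only [smul_sub, smul_smul, e₁, e₂, one_smul, neg_mul, neg_smul]
  abel

theorem distributedDelay_congr {y x : ℝ → E} {δ t : ℝ} (hδ : 0 ≤ δ)
    (hyx : EqOn y x (Icc (t - δ) t)) (lam : ℝ) :
    distributedDelay lam δ y t = distributedDelay lam δ x t := by
  refine integral_congr fun θ hθ => ?_
  rw [uIcc_of_le (neg_nonpos.mpr hδ)] at hθ
  rw [hyx ⟨by linarith [hθ.1], by linarith [hθ.2]⟩]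

theorem distributedDelay_eq_integral [CompleteSpace E] {y : ℝ → E} (hy : Continuous y) {δ : ℝ}
    (hδ : 0 ≤ δ) (hy0 : EqOn y 0 (Icc (-δ) 0)) (lam t : ℝ) :
    distributedDelay lam δ y t = ∫ s in (0 : ℝ)..t,
      (y s - Real.exp (-(lam * δ)) • y (s - δ) - lam • distributedDelay lam δ y s) := by
  have hzero : distributedDelay lam δ y 0 = 0 := by
    rw [distributedDelay_congr hδ (by simpa using hy0) lam]
    simp [distributedDelay]
  have hderiv := hasDerivAt_distributedDelay hy lam δ
  have hcont : Continuous (distributedDelay lam δ y) :=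
    continuous_iff_continuousAt.mpr fun t => (hderiv t).continuousAt
  rw [integral_eq_sub_of_hasDerivAt (fun s _ => hderiv s), hzero, sub_zero]
  exact ((hy.sub ((hy.comp (continuous_sub_right δ)).const_smul _)).sub
    (hcont.const_smul lam)).intervalIntegrable _ _

theorem stmt1_general {n : ℕ} (δ lam T : ℝ) (hδ : 0 < δ)
    (x : ℝ → EuclideanSpace ℝ (Fin n)) (hx : ContinuousOn x (Set.Icc (-δ) T))
    (hx0 : ∀ s ∈ Set.Icc (-δ) (0 : ℝ), x s = 0)
    (z : ℝ → EuclideanSpace ℝ (Fin n))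
    (hz : ∀ t, z t = ∫ θ in (-δ)..0, Real.exp (lam * θ) • x (t + θ)) :
    ∀ t ∈ Set.Icc (0 : ℝ) T,
      z t = ∫ s in (0 : ℝ)..t,
        (x s - (if δ < s then Real.exp (-(lam * δ)) • x (s - δ) else 0) - lam • z s) := by
  rintro t ⟨ht0, htT⟩
  have hδT : -δ ≤ T := by linarith
  set y := IccExtend hδT ((Icc (-δ) T).domRestrict x)
  have hy : Continuous y := hx.domRestrict.Icc_extend'
  have hyx : EqOn y x (Icc (-δ) T) := fun s hs => IccExtend_of_mem _ _ hs
  have hzy : ∀ s ∈ Icc 0 T, z s = distributedDelay lam δ y s := fun s hs =>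
    (hz s).trans (distributedDelay_congr hδ.le
      (hyx.mono (Icc_subset_Icc (by linarith [hs.1]) hs.2)) lam).symm
  have hy0 : EqOn y 0 (Icc (-δ) 0) := fun s hs =>
    (hyx ⟨hs.1, by linarith [hs.2]⟩).trans (hx0 s hs)
  rw [hzy t ⟨ht0, htT⟩, distributedDelay_eq_integral hy hδ.le hy0]
  refine integral_congr fun s hs => ?_
  rw [uIcc_of_le ht0] at hs
  have hsT : s ≤ T := hs.2.trans htT
  rw [hyx ⟨by linarith [hs.1], hsT⟩, hzy s ⟨hs.1, hsT⟩]
  split_ifs with hsδ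
  · rw [hyx ⟨by linarith, by linarith⟩]
  · rw [hy0 ⟨by linarith [hs.1], by linarith⟩, Pi.zero_apply, smul_zero]

/-- If `x` is continuous on `[-δ, T]` and vanishes on `[-δ, 0]`, then the distributed
delay term `z(t) = ∫_{-δ}^0 e^{λθ} x(t+θ) dθ` solves the delay-free Volterra integral
equation `z(t) = ∫_0^t [x(s) - e^{-λδ} x(s-δ) 1_{(δ,∞)}(s) - λ z(s)] ds` on `[0, T]`. -/
theorem stmt1 {n : ℕ} (δ lam T : ℝ) (hδ : 0 < δ) (hT : 0 < T)
    (x : ℝ → EuclideanSpace ℝ (Fin n)) (hx : ContinuousOn x (Set.Icc (-δ) T))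
    (hx0 : ∀ s ∈ Set.Icc (-δ) (0 : ℝ), x s = 0)
    (z : ℝ → EuclideanSpace ℝ (Fin n))
    (hz : ∀ t, z t = ∫ θ in (-δ)..0, Real.exp (lam * θ) • x (t + θ)) :
    ∀ t ∈ Set.Icc (0 : ℝ) T,
      z t = ∫ s in (0 : ℝ)..t,
        (x s - (if δ < s then Real.exp (-(lam * δ)) • x (s - δ) else 0) - lam • z s) :=
  stmt1_general δ lam T hδ x hx hx0 z hz
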